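/- Assume there exist C₀, δ₀ > 0 such that |∂^ν Q(x)| ≤ C₀ e^{−δ₀ |x|} for all x ∈ ℝ^d and all multi-indices ν with |ν| ≤ 1. Then for every t < T the energy of the pseudo-conformal blow-up solution satisfies E(S_T(t)) = (T−t)^{−2} E(Q) + (1/8) ∫_{ℝ^d} |x|² Q(x)² dx. -/

import Mathlib

noncomputable section

open MeasureTheory Complex

/-- Partial derivative of a real-valued function on `ℝ^d` in the `i`-th coordinate
direction. -/
def pd {d : ℕ} (f : EuclideanSpace ℝ (Fin d) → ℝ) (i : Fin d)
    (x : EuclideanSpace ℝ (Fin d)) : ℝ :=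
  fderiv ℝ f x (EuclideanSpace.single i 1)

/-- Laplacian of a real-valued function on `ℝ^d`. -/
def lap {d : ℕ} (f : EuclideanSpace ℝ (Fin d) → ℝ)
    (x : EuclideanSpace ℝ (Fin d)) : ℝ :=
  ∑ i, pd (pd f i) i x

/-- Partial derivative of a complex-valued function on `ℝ^d` in the `i`-th coordinate
direction. -/
def pdC {d : ℕ} (f : EuclideanSpace ℝ (Fin d) → ℂ) (i : Fin d)
    (x : EuclideanSpace ℝ (Fin d)) : ℂ :=
  fderiv ℝ f x (EuclideanSpace.single i 1)

/-- The energy of a complex-valued function: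
`E(v) = (1/2)∫|∇v|² − (d/(2d+4))∫|v|^{2+4/d}`. -/
def energyC {d : ℕ} (v : EuclideanSpace ℝ (Fin d) → ℂ) : ℝ :=
  (1 / 2) * (∫ x : EuclideanSpace ℝ (Fin d), ∑ i, ‖pdC v i x‖ ^ 2)
    - ((d : ℝ) / (2 * d + 4)) *
        ∫ x : EuclideanSpace ℝ (Fin d), ‖v x‖ ^ ((2 : ℝ) + 4 / d)

/-- The energy of a real-valued function. -/
def energyR {d : ℕ} (v : EuclideanSpace ℝ (Fin d) → ℝ) : ℝ :=
  (1 / 2) * (∫ x : EuclideanSpace ℝ (Fin d), ∑ i, pd v i x ^ 2)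
    - ((d : ℝ) / (2 * d + 4)) *
        ∫ x : EuclideanSpace ℝ (Fin d), |v x| ^ ((2 : ℝ) + 4 / d)

/-- The pseudo-conformal blow-up profile
`S_T(t,x) = (T−t)^{−d/2} Q(x/(T−t)) exp(i/(T−t) − i|x|²/(4(T−t)))`. -/
def STprof {d : ℕ} (Q : EuclideanSpace ℝ (Fin d) → ℝ) (T t : ℝ)
    (x : EuclideanSpace ℝ (Fin d)) : ℂ :=
  (((T - t) ^ (-(d : ℝ) / 2) : ℝ) : ℂ) * (Q ((T - t)⁻¹ • x) : ℂ) *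
    Complex.exp (Complex.I * ((1 / (T - t) - ‖x‖ ^ 2 / (4 * (T - t)) : ℝ) : ℂ))

section aux

lemma integrable_exp_decay (d : ℕ) {c : ℝ} (hc : 0 < c) :
    Integrable (fun x : EuclideanSpace ℝ (Fin d) => Real.exp (-c * ‖x‖)) := by
  set m : ℝ := min 1 (c / (d + 1)) with hm
  have hm0 : 0 < m := lt_min one_pos (by positivity)
  have hm1 : m ≤ 1 := min_le_left _ _
  have hm2 : m ≤ c / (d + 1) := min_le_right _ _
  have hfin : (Module.finrank ℝ (EuclideanSpace ℝ (Fin d)) : ℝ) < (d + 1 : ℕ) := by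
    rw [finrank_euclideanSpace_fin]; exact_mod_cast Nat.lt_succ_self d
  refine ((integrable_one_add_norm hfin).const_mul ((m ^ (d + 1))⁻¹)).mono'
    ((Real.continuous_exp.comp (continuous_const.mul continuous_norm)).aestronglyMeasurable) ?_
  filter_upwards with x
  have hs : (0:ℝ) ≤ ‖x‖ := norm_nonneg x
  have key : (m * (1 + ‖x‖)) ^ (d + 1) ≤ Real.exp (c * ‖x‖) := by
    have h2 : m * ‖x‖ ≤ (c / (d + 1)) * ‖x‖ := mul_le_mul_of_nonneg_right hm2 hs
    have h1 : m * (1 + ‖x‖) ≤ 1 + c * ‖x‖ / (d + 1) := by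
      have : (c / (d + 1)) * ‖x‖ = c * ‖x‖ / (d + 1) := by ring
      nlinarith
    calc (m * (1 + ‖x‖)) ^ (d + 1) ≤ (1 + c * ‖x‖ / (d + 1)) ^ (d + 1) := by
          apply pow_le_pow_left₀ (by positivity) h1
      _ ≤ Real.exp (c * ‖x‖ / (d + 1)) ^ (d + 1) := by
          apply pow_le_pow_left₀ (by positivity)
            (by linarith [Real.add_one_le_exp (c * ‖x‖ / (d + 1))])
      _ = Real.exp (c * ‖x‖) := by
          rw [← Real.exp_nat_mul]; congr 1; field_simp; push_cast; ring
  have h3 : Real.exp (-c * ‖x‖) ≤ (m ^ (d + 1))⁻¹ * ((1 + ‖x‖) ^ (d + 1))⁻¹ := by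
    rw [neg_mul, Real.exp_neg, ← mul_inv, ← mul_pow]
    exact inv_anti₀ (by positivity) key
  calc ‖Real.exp (-c * ‖x‖)‖ = Real.exp (-c * ‖x‖) := Real.norm_of_nonneg (Real.exp_pos _).le
    _ ≤ (m ^ (d + 1))⁻¹ * ((1 + ‖x‖) ^ (d + 1))⁻¹ := h3
    _ = (m ^ (d + 1))⁻¹ * (1 + ‖x‖) ^ (-(d + 1 : ℕ) : ℝ) := by
        rw [Real.rpow_neg (by positivity), Real.rpow_natCast]

lemma pdC_STprof {d : ℕ} (Q : EuclideanSpace ℝ (Fin d) → ℝ) (hQ : ContDiff ℝ (⊤ : ℕ∞) Q)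
    (T t : ℝ) (x : EuclideanSpace ℝ (Fin d)) (i : Fin d) :
    pdC (STprof Q T t) i x =
      (((T - t) ^ (-(d : ℝ) / 2) : ℝ) : ℂ) *
        ((((T - t)⁻¹ * pd Q i ((T - t)⁻¹ • x) : ℝ) : ℂ)
          + ((Q ((T - t)⁻¹ • x) * (-(x i) / (2 * (T - t))) : ℝ) : ℂ) * Complex.I) *
        Complex.exp (Complex.I * ((1 / (T - t) - ‖x‖ ^ 2 / (4 * (T - t)) : ℝ) : ℂ)) := by
  set L := T - t with hL
  set y : EuclideanSpace ℝ (Fin d) := L⁻¹ • x with hy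
  set c : ℝ := L ^ (-(d : ℝ) / 2) with hc
  have hsmul : HasFDerivAt (fun z : EuclideanSpace ℝ (Fin d) => L⁻¹ • z)
      (L⁻¹ • ContinuousLinearMap.id ℝ (EuclideanSpace ℝ (Fin d))) x :=
    (hasFDerivAt_id x).const_smul L⁻¹
  have hq : HasFDerivAt Q (fderiv ℝ Q y) y := (hQ.differentiable (by simp) y).hasFDerivAt
  have h1 : HasFDerivAt (fun z => Q (L⁻¹ • z))
      ((fderiv ℝ Q y).comp (L⁻¹ • ContinuousLinearMap.id ℝ (EuclideanSpace ℝ (Fin d)))) x :=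
    hq.comp x hsmul
  have hA : HasFDerivAt (fun z => ((c : ℝ) : ℂ) * ((Q (L⁻¹ • z) : ℝ) : ℂ))
      ((c : ℂ) • (Complex.ofRealCLM.comp
        ((fderiv ℝ Q y).comp (L⁻¹ • ContinuousLinearMap.id ℝ (EuclideanSpace ℝ (Fin d)))))) x :=
    (Complex.ofRealCLM.hasFDerivAt.comp x h1).const_mul _
  have hnorm : HasFDerivAt (fun z : EuclideanSpace ℝ (Fin d) => ‖z‖ ^ 2)
      (2 • (innerSL ℝ x)) x := (hasStrictFDerivAt_norm_sq x).hasFDerivAt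
  have hφ : HasFDerivAt (fun z : EuclideanSpace ℝ (Fin d) => 1 / L - (4 * L)⁻¹ * ‖z‖ ^ 2)
      (0 - (4 * L)⁻¹ • (2 • (innerSL ℝ x))) x :=
    (hasFDerivAt_const (1 / L) x).sub (hnorm.const_mul ((4 * L)⁻¹))
  have hφC : HasFDerivAt
      (fun z : EuclideanSpace ℝ (Fin d) =>
        Complex.I * (((1 / L - (4 * L)⁻¹ * ‖z‖ ^ 2 : ℝ)) : ℂ))
      (Complex.I • (Complex.ofRealCLM.comp (0 - (4 * L)⁻¹ • (2 • (innerSL ℝ x))))) x :=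
    (Complex.ofRealCLM.hasFDerivAt.comp x hφ).const_mul _
  have hB := hφC.cexp
  have hS := hA.mul hB
  have hST : STprof Q T t = fun z =>
      ((c : ℝ) : ℂ) * ((Q (L⁻¹ • z) : ℝ) : ℂ) *
        Complex.exp (Complex.I * (((1 / L - (4 * L)⁻¹ * ‖z‖ ^ 2 : ℝ)) : ℂ)) := by
    funext z
    rw [STprof, inv_mul_eq_div]
  rw [pdC, hST, (show HasFDerivAt (fun z : EuclideanSpace ℝ (Fin d) =>
      ((c : ℝ) : ℂ) * ((Q (L⁻¹ • z) : ℝ) : ℂ) *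
        Complex.exp (Complex.I * (((1 / L - (4 * L)⁻¹ * ‖z‖ ^ 2 : ℝ)) : ℂ))) _ x from hS).fderiv]
  simp only [ContinuousLinearMap.add_apply, ContinuousLinearMap.coe_smul', Pi.smul_apply,
    ContinuousLinearMap.comp_apply, ContinuousLinearMap.id_apply, ContinuousLinearMap.zero_apply,
    ContinuousLinearMap.sub_apply, Complex.ofRealCLM_apply, smul_eq_mul,
    ContinuousLinearMap.map_smul, innerSL_apply_apply]
  simp only [innerSL_apply_apply, EuclideanSpace.inner_single_right, RCLike.conj_to_real, map_inv₀]
  simp only [pd, nsmul_eq_mul, smul_eq_mul, inv_mul_eq_div]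
  push_cast
  ring

end aux

/-- the energy of the pseudo-conformal blow-up solution satisfies
`E(S_T(t)) = (T−t)^{−2} E(Q) + (1/8)∫|x|²Q²`. -/
theorem STprof_energy (d : ℕ) (hd : 1 ≤ d)
    (Q : EuclideanSpace ℝ (Fin d) → ℝ)
    (hQsmooth : ContDiff ℝ (⊤ : ℕ∞) Q) (hQpos : ∀ x, 0 < Q x)
    (hQsol : ∀ x, lap Q x - Q x + Q x ^ ((1 : ℝ) + 4 / d) = 0)
    (C₀ δ₀ : ℝ) (hC₀ : 0 < C₀) (hδ₀ : 0 < δ₀)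
    (hQdecay : ∀ x : EuclideanSpace ℝ (Fin d),
      |Q x| ≤ C₀ * Real.exp (-δ₀ * ‖x‖) ∧
      ∀ i, |pd Q i x| ≤ C₀ * Real.exp (-δ₀ * ‖x‖))
    (T : ℝ) :
    ∀ t < T,
      energyC (STprof Q T t)
        = ((T - t) ^ 2)⁻¹ * energyR Q
          + (1 / 8) * ∫ x : EuclideanSpace ℝ (Fin d), ‖x‖ ^ 2 * Q x ^ 2 := by
  intro t ht
  have hL : (0:ℝ) < T - t := sub_pos.2 ht
  have hLne : T - t ≠ 0 := hL.ne'
  have hdR : (0:ℝ) < d := by exact_mod_cast hd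
  have hQc : Continuous Q := hQsmooth.continuous
  have hpdc : ∀ i, Continuous (pd Q i) := fun i =>
    (hQsmooth.continuous_fderiv_apply (by simp)).comp (continuous_id.prodMk continuous_const)
  -- integrability of G
  have hGi : ∀ i : Fin d, Integrable (fun y : EuclideanSpace ℝ (Fin d) => pd Q i y ^ 2) := by
    intro i
    refine ((integrable_exp_decay d (by positivity : (0:ℝ) < 2*δ₀)).const_mul (C₀^2)).mono'
      (((hpdc i).pow 2).aestronglyMeasurable) ?_
    filter_upwards with y
    have h1 := (hQdecay y).2 i
    have h3 : pd Q i y ^ 2 ≤ (C₀ * Real.exp (-δ₀*‖y‖))^2 := by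
      rw [← _root_.sq_abs]; exact pow_le_pow_left₀ (abs_nonneg _) h1 2
    have e2 : ((2:ℝ)) * (-δ₀*‖y‖) = -(2*δ₀) * ‖y‖ := by ring
    calc ‖pd Q i y ^ 2‖ = pd Q i y ^2 := Real.norm_of_nonneg (sq_nonneg _)
      _ ≤ (C₀ * Real.exp (-δ₀*‖y‖)) ^ 2 := h3
      _ = C₀ ^2 * Real.exp (-(2*δ₀) * ‖y‖) := by
          rw [mul_pow, ← Real.exp_nat_mul]; push_cast; rw [e2]
  have hG : Integrable (fun y : EuclideanSpace ℝ (Fin d) => ∑ i, pd Q i y ^ 2) :=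
    integrable_finset_sum _ (fun i _ => hGi i)
  -- integrability of H
  have hH : Integrable (fun y : EuclideanSpace ℝ (Fin d) => ‖y‖ ^ 2 * Q y ^ 2) := by
    refine ((integrable_exp_decay d hδ₀).const_mul (4*C₀^2/δ₀^2)).mono'
      (((continuous_norm.pow 2).mul (hQc.pow 2)).aestronglyMeasurable) ?_
    filter_upwards with y
    have h1 := (hQdecay y).1
    have hs : (0:ℝ) ≤ ‖y‖ := norm_nonneg y
    have hQ2 : Q y ^2 ≤ (C₀ * Real.exp (-δ₀*‖y‖))^2 := by
      calc Q y ^ 2 = |Q y| ^ 2 := (_root_.sq_abs _).symm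
        _ ≤ (C₀ * Real.exp (-δ₀*‖y‖))^2 := pow_le_pow_left₀ (abs_nonneg _) h1 2
    have hexp : δ₀ * ‖y‖ / 2 + 1 ≤ Real.exp (δ₀*‖y‖/2) := by
      linarith [Real.add_one_le_exp (δ₀*‖y‖/2)]
    have e2 : Real.exp (δ₀*‖y‖/2)^2 = Real.exp (δ₀*‖y‖) := by
      rw [← Real.exp_nat_mul]; congr 1; push_cast; ring
    have hn : ‖y‖^2 ≤ 4/δ₀^2 * Real.exp (δ₀*‖y‖) := by
      rw [← e2]
      have h4 : δ₀ * ‖y‖ / 2 ≤ Real.exp (δ₀*‖y‖/2) := by linarith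
      have h5 : (δ₀ * ‖y‖ / 2)^2 ≤ Real.exp (δ₀*‖y‖/2)^2 :=
        pow_le_pow_left₀ (by positivity) h4 2
      have : ‖y‖^2 = 4/δ₀^2 * (δ₀ * ‖y‖ / 2)^2 := by field_simp; ring
      rw [this]
      exact mul_le_mul_of_nonneg_left h5 (by positivity)
    have hinv : Real.exp (-δ₀*‖y‖) * Real.exp (δ₀*‖y‖) = 1 := by
      rw [← Real.exp_add]; norm_num
    have hHb : ‖y‖^2 * Q y^2 ≤ 4*C₀^2/δ₀^2 * Real.exp (-δ₀*‖y‖) := by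
      calc ‖y‖^2 * Q y^2 ≤ (4/δ₀^2 * Real.exp (δ₀*‖y‖)) * ((C₀ * Real.exp (-δ₀*‖y‖))^2) := by
            apply mul_le_mul hn hQ2 (by positivity) (by positivity)
        _ = 4*C₀^2/δ₀^2 * ((Real.exp (-δ₀*‖y‖) * Real.exp (δ₀*‖y‖)) * Real.exp (-δ₀*‖y‖)) := by
            ring
        _ = 4*C₀^2/δ₀^2 * Real.exp (-δ₀*‖y‖) := by rw [hinv, one_mul]
    calc ‖‖y‖^2 * Q y^2‖ = ‖y‖^2 * Q y^2 := Real.norm_of_nonneg (by positivity)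
      _ ≤ 4*C₀^2/δ₀^2 * Real.exp (-δ₀*‖y‖) := hHb
  -- integrability of P
  have hp0 : (0:ℝ) ≤ 2 + 4/d := by positivity
  have hp2 : (2:ℝ) ≤ 2 + 4/d := by
    have : (0:ℝ) ≤ 4/d := by positivity
    linarith
  have hP : Integrable (fun y : EuclideanSpace ℝ (Fin d) => |Q y| ^ ((2:ℝ) + 4 / d)) := by
    refine ((integrable_exp_decay d (by positivity : (0:ℝ) < 2*δ₀)).const_mul
        (C₀ ^ ((2:ℝ) + 4/d))).mono'
      ((hQc.abs.rpow_const (fun x => Or.inr hp0)).aestronglyMeasurable) ?_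
    filter_upwards with y
    have h1 := (hQdecay y).1
    have hs : (0:ℝ) ≤ ‖y‖ := norm_nonneg y
    have h2 : |Q y| ^ ((2:ℝ)+4/d) ≤ (C₀ * Real.exp (-δ₀*‖y‖)) ^ ((2:ℝ)+4/d) :=
      Real.rpow_le_rpow (abs_nonneg _) h1 hp0
    have h3 : (C₀ * Real.exp (-δ₀*‖y‖)) ^ ((2:ℝ)+4/d)
        = C₀ ^ ((2:ℝ)+4/d) * Real.exp (-δ₀*‖y‖ * (2+4/d)) := by
      rw [Real.mul_rpow hC₀.le (Real.exp_pos _).le,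
        Real.rpow_def_of_pos (Real.exp_pos _), Real.log_exp]
    have h4 : Real.exp (-δ₀*‖y‖ * (2+4/d)) ≤ Real.exp (-(2*δ₀)*‖y‖) := by
      apply Real.exp_le_exp.2
      have : (0:ℝ) ≤ δ₀ * ‖y‖ * (4/d) := by positivity
      nlinarith
    calc ‖|Q y| ^ ((2:ℝ)+4/d)‖ = |Q y| ^ ((2:ℝ)+4/d) := Real.norm_of_nonneg (Real.rpow_nonneg (abs_nonneg _) _)
      _ ≤ C₀ ^ ((2:ℝ)+4/d) * Real.exp (-δ₀*‖y‖ * (2+4/d)) := by rw [← h3]; exact h2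
      _ ≤ C₀ ^ ((2:ℝ)+4/d) * Real.exp (-(2*δ₀)*‖y‖) :=
          mul_le_mul_of_nonneg_left h4 (Real.rpow_nonneg hC₀.le _)
  -- scaling constants
  have hcpos : (0:ℝ) < (T - t) ^ (-(d:ℝ)/2) := Real.rpow_pos_of_pos hL _
  have hc2 : ((T - t) ^ (-(d:ℝ)/2))^2 = (T - t) ^ (-(d:ℝ)) := by
    rw [← Real.rpow_natCast ((T - t) ^ (-(d:ℝ)/2)) 2, ← Real.rpow_mul hL.le]
    norm_num
  have hsum2 : ∀ x : EuclideanSpace ℝ (Fin d), ∑ i, (x i)^2 = ‖x‖^2 := by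
    intro x
    rw [EuclideanSpace.norm_eq, Real.sq_sqrt (by positivity)]
    simp [_root_.sq_abs]
  have hnsm : ∀ x : EuclideanSpace ℝ (Fin d), ‖(T-t)⁻¹ • x‖^2 = ((T-t)⁻¹)^2 * ‖x‖^2 := by
    intro x
    rw [norm_smul, mul_pow]
    congr 1
    rw [Real.norm_eq_abs, _root_.sq_abs]
  -- pointwise kinetic identity
  have hK : ∀ x, (∑ i, ‖pdC (STprof Q T t) i x‖ ^ 2)
      = (T - t) ^ (-(d:ℝ)) * (((T - t)^2)⁻¹ * (∑ i, pd Q i ((T-t)⁻¹ • x) ^ 2)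
          + 4⁻¹ * (‖(T-t)⁻¹ • x‖^2 * Q ((T-t)⁻¹ • x)^2)) := by
    intro x
    have habs : ∀ i, ‖pdC (STprof Q T t) i x‖ ^ 2
        = (((T-t) ^ (-(d:ℝ)/2))^2 * ((T-t)⁻¹)^2) * pd Q i ((T-t)⁻¹ • x) ^ 2
          + (((T-t) ^ (-(d:ℝ)/2))^2 * Q ((T-t)⁻¹ • x)^2 * ((2*(T-t))⁻¹)^2) * (x i)^2 := by
      intro i
      rw [pdC_STprof Q hQsmooth T t x i, Complex.sq_norm, Complex.normSq_mul, Complex.normSq_mul,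
        Complex.normSq_ofReal, Complex.normSq_add_mul_I]
      have hre : (Complex.I * ((1 / (T-t) - ‖x‖ ^ 2 / (4 * (T-t)) : ℝ) : ℂ)).re = 0 := by
        rw [Complex.mul_re, Complex.I_re, Complex.I_im, Complex.ofReal_re, Complex.ofReal_im]
        ring
      have h1 : Complex.normSq (Complex.exp (Complex.I *
          ((1 / (T-t) - ‖x‖ ^ 2 / (4 * (T-t)) : ℝ) : ℂ))) = 1 := by
        rw [← Complex.sq_norm, Complex.norm_exp, hre, Real.exp_zero, one_pow]
      rw [h1]
      ring
    rw [Finset.sum_congr rfl (fun i _ => habs i), Finset.sum_add_distrib, ← Finset.mul_sum,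
      ← Finset.mul_sum, hnsm, ← hsum2 x, hc2]
    simp only [inv_pow]
    rw [show ((2*(T-t))^2 : ℝ) = 4 * (T-t)^2 by ring, mul_inv]
    ring
  -- kinetic integral
  have hchg1 : (∫ x : EuclideanSpace ℝ (Fin d), (((T-t)^2)⁻¹ * (∑ i, pd Q i ((T-t)⁻¹ • x)^2)
        + 4⁻¹ * (‖(T-t)⁻¹ • x‖^2 * Q ((T-t)⁻¹ • x)^2)))
      = (T-t)^d • ∫ y : EuclideanSpace ℝ (Fin d), (((T-t)^2)⁻¹ * (∑ i, pd Q i y^2)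
        + 4⁻¹ * (‖y‖^2 * Q y^2)) := by
    simpa only [finrank_euclideanSpace_fin] using
      MeasureTheory.Measure.integral_comp_inv_smul_of_nonneg volume
        (fun y : EuclideanSpace ℝ (Fin d) => ((T-t)^2)⁻¹ * (∑ i, pd Q i y^2)
          + 4⁻¹ * (‖y‖^2 * Q y^2)) hL.le
  have hLd : (T-t) ^ (-(d:ℝ)) * (T-t)^(d:ℕ) = 1 := by
    rw [Real.rpow_neg hL.le, Real.rpow_natCast]
    exact inv_mul_cancel₀ (pow_ne_zero d hLne)
  have hKint : (∫ x : EuclideanSpace ℝ (Fin d), ∑ i, ‖pdC (STprof Q T t) i x‖^2)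
      = ((T-t)^2)⁻¹ * (∫ y : EuclideanSpace ℝ (Fin d), ∑ i, pd Q i y^2)
        + 4⁻¹ * ∫ y : EuclideanSpace ℝ (Fin d), ‖y‖^2 * Q y^2 := by
    simp only [hK]
    rw [integral_const_mul, hchg1, smul_eq_mul, ← mul_assoc, hLd, one_mul,
      integral_add (hG.const_mul _) (hH.const_mul _), integral_const_mul, integral_const_mul]
  -- potential pointwise
  have hPt : ∀ x, ‖STprof Q T t x‖ ^ ((2:ℝ) + 4/d)
      = (T-t) ^ (-(d:ℝ) - 2) * |Q ((T-t)⁻¹ • x)| ^ ((2:ℝ)+4/d) := by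
    intro x
    have habs : ‖STprof Q T t x‖ = (T-t) ^ (-(d:ℝ)/2) * |Q ((T-t)⁻¹ • x)| := by
      have hre : (Complex.I * ((1 / (T-t) - ‖x‖ ^ 2 / (4 * (T-t)) : ℝ) : ℂ)).re = 0 := by
        rw [Complex.mul_re, Complex.I_re, Complex.I_im, Complex.ofReal_re, Complex.ofReal_im]
        ring
      rw [STprof, norm_mul, norm_mul, Complex.norm_exp, hre, Real.exp_zero, mul_one,
        Complex.norm_real, Complex.norm_real, Real.norm_eq_abs, Real.norm_eq_abs,
        abs_of_pos hcpos]
    rw [habs, Real.mul_rpow hcpos.le (abs_nonneg _), ← Real.rpow_mul hL.le]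
    congr 2
    have hdne : (d:ℝ) ≠ 0 := ne_of_gt hdR
    field_simp
    ring
  have hchg2 : (∫ x : EuclideanSpace ℝ (Fin d), |Q ((T-t)⁻¹ • x)| ^ ((2:ℝ)+4/d))
      = (T-t)^d • ∫ y : EuclideanSpace ℝ (Fin d), |Q y| ^ ((2:ℝ)+4/d) := by
    simpa [finrank_euclideanSpace_fin] using
      MeasureTheory.Measure.integral_comp_inv_smul_of_nonneg volume
        (fun y : EuclideanSpace ℝ (Fin d) => |Q y| ^ ((2:ℝ)+4/d)) hL.le
  have hPint : (∫ x : EuclideanSpace ℝ (Fin d), ‖STprof Q T t x‖ ^ ((2:ℝ)+4/d))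
      = ((T-t)^2)⁻¹ * ∫ y : EuclideanSpace ℝ (Fin d), |Q y| ^ ((2:ℝ)+4/d) := by
    simp only [hPt]
    rw [integral_const_mul, hchg2, smul_eq_mul, ← mul_assoc]
    congr 1
    rw [← Real.rpow_natCast (T-t) d, ← Real.rpow_add hL,
      show -(d:ℝ) - 2 + d = -2 by ring,
      show ((-2:ℝ)) = -((2:ℕ):ℝ) by norm_num,
      Real.rpow_neg hL.le, Real.rpow_natCast]
  rw [energyC, energyR, hKint, hPint]
  ring
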